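/- arXiv:2108.00083 — 3 statements merged into one kernel-verified Lean document; each statement's English description precedes it below -/
import Mathlib

section
/- Let M ∈ ℝ^{n×n} be a symmetric positive semidefinite matrix and let ρ : ℝ → ℝ be a loss kernel (differentiable on [0,∞), concave on [0,∞), with 0 ≤ ρ'(s) ≤ 1 for all s ≥ 0). Then for all matrices X, X⁰ ∈ ℝ^{d×n}, setting ω := ρ'(‖X⁰‖²_M), one has (1/2)·ω·‖X − X⁰‖²_M + ω·⟨X⁰M, X − X⁰⟩ + (1/2)·ρ(‖X⁰‖²_M) ≥ (1/2)·ρ(‖X‖²_M), and equality holds when X = X⁰. (Here ω·⟨X⁰M, X − X⁰⟩ is exactly ⟨∇F(X⁰), X − X⁰⟩ for F(X) := (1/2)ρ(‖X‖²_M).) -/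
open Matrix

/-! A concave `ρ` lies below its tangent line at `s₀ = ‖X₀‖²_M`, and both `‖X‖²_M` and `s₀` lie in
`[0, ∞)` because `M` is positive semidefinite. Since `M` is symmetric,
`‖X‖²_M = s₀ + 2 ⟨X₀M, X - X₀⟩ + ‖X - X₀‖²_M`, so the tangent bound at `‖X‖²_M` is exactly the claim. -/

theorem ConcaveOn.le_add_mul_sub_of_hasDerivWithinAt {S : Set ℝ} {f : ℝ → ℝ} {f' x y : ℝ}
    (hfc : ConcaveOn ℝ S f) (hx : x ∈ S) (hy : y ∈ S) (hf' : HasDerivWithinAt f f' S x) :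
    f y ≤ f x + f' * (y - x) := by
  rcases lt_trichotomy x y with hxy | rfl | hyx
  · have hslope := hfc.slope_le_of_hasDerivWithinAt hx hy hxy hf'
    rw [slope_def_field, div_le_iff₀ (sub_pos.2 hxy)] at hslope
    linarith
  · simp
  · have hslope := hfc.le_slope_of_hasDerivWithinAt hy hx hyx hf'
    rw [slope_def_field, le_div_iff₀ (sub_pos.2 hyx)] at hslope
    linarith

namespace Matrix

variable {m n R : Type*} [Fintype m] [Fintype n]

theorem IsSymm.trace_add_mul_mul_transpose_add [CommRing R] {M : Matrix n n R} (hM : M.IsSymm)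
    (B D : Matrix m n R) :
    ((B + D) * M * (B + D)ᵀ).trace
      = (B * M * Bᵀ).trace + 2 * (B * M * Dᵀ).trace + (D * M * Dᵀ).trace := by
  have hcross : (D * M * Bᵀ).trace = (B * M * Dᵀ).trace := by
    rw [← trace_transpose, transpose_mul, transpose_mul, transpose_transpose, hM.eq,
      Matrix.mul_assoc]
  simp only [Matrix.add_mul, Matrix.mul_add, transpose_add, trace_add, hcross]
  ring

theorem PosSemidef.trace_mul_mul_transpose_nonneg {M : Matrix n n ℝ} (hM : M.PosSemidef)
    (A : Matrix m n ℝ) : 0 ≤ (A * M * Aᵀ).trace := by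
  simpa only [conjTranspose_eq_transpose_of_trivial] using
    (hM.mul_mul_conjTranspose_same A).trace_nonneg

end Matrix

theorem loss_majorization_general {d n : ℕ}
    (M : Matrix (Fin n) (Fin n) ℝ) (hM : M.PosSemidef)
    (ρ ρ' : ℝ → ℝ)
    (hdiff : ∀ s ∈ Set.Ici (0:ℝ), HasDerivWithinAt ρ (ρ' s) (Set.Ici 0) s)
    (hconc : ConcaveOn ℝ (Set.Ici 0) ρ)
    (X X₀ : Matrix (Fin d) (Fin n) ℝ) :
    (1/2) * ρ' ((X₀ * M * X₀ᵀ).trace) * (((X - X₀) * M * (X - X₀)ᵀ).trace)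
      + ρ' ((X₀ * M * X₀ᵀ).trace) * (((X₀ * M) * (X - X₀)ᵀ).trace)
      + (1/2) * ρ ((X₀ * M * X₀ᵀ).trace)
      ≥ (1/2) * ρ ((X * M * Xᵀ).trace)
    ∧ (X = X₀ →
      (1/2) * ρ' ((X₀ * M * X₀ᵀ).trace) * (((X - X₀) * M * (X - X₀)ᵀ).trace)
      + ρ' ((X₀ * M * X₀ᵀ).trace) * (((X₀ * M) * (X - X₀)ᵀ).trace)
      + (1/2) * ρ ((X₀ * M * X₀ᵀ).trace)
      = (1/2) * ρ ((X * M * Xᵀ).trace)) := by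
  have hexpand : (X * M * Xᵀ).trace = (X₀ * M * X₀ᵀ).trace
      + 2 * ((X₀ * M) * (X - X₀)ᵀ).trace + ((X - X₀) * M * (X - X₀)ᵀ).trace := by
    simpa only [add_sub_cancel] using
      (isHermitian_iff_isSymm.mp hM.1).trace_add_mul_mul_transpose_add X₀ (X - X₀)
  have hs := hM.trace_mul_mul_transpose_nonneg X₀
  have htangent := hconc.le_add_mul_sub_of_hasDerivWithinAt hs
    (hM.trace_mul_mul_transpose_nonneg X) (hdiff _ hs)
  refine ⟨?_, ?_⟩
  · rw [hexpand] at htangent ⊢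
    linarith
  · rintro rfl
    simp

/-- Majorization of a robust loss term at an iterate `X₀`
(Proposition 1 of the paper). Here `‖Y‖²_M = trace (Y * M * Yᵀ)` and
`⟨A, B⟩ = trace (A * Bᵀ)`. -/
theorem loss_majorization {d n : ℕ}
    (M : Matrix (Fin n) (Fin n) ℝ) (hM : M.PosSemidef)
    (ρ ρ' : ℝ → ℝ)
    (hdiff : ∀ s ∈ Set.Ici (0:ℝ), HasDerivWithinAt ρ (ρ' s) (Set.Ici 0) s)
    (hconc : ConcaveOn ℝ (Set.Ici 0) ρ)
    (hρ' : ∀ s : ℝ, 0 ≤ s → 0 ≤ ρ' s ∧ ρ' s ≤ 1)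
    (X X₀ : Matrix (Fin d) (Fin n) ℝ) :
    (1/2) * ρ' ((X₀ * M * X₀ᵀ).trace) * (((X - X₀) * M * (X - X₀)ᵀ).trace)
      + ρ' ((X₀ * M * X₀ᵀ).trace) * (((X₀ * M) * (X - X₀)ᵀ).trace)
      + (1/2) * ρ ((X₀ * M * X₀ᵀ).trace)
      ≥ (1/2) * ρ ((X * M * Xᵀ).trace)
    ∧ (X = X₀ →
      (1/2) * ρ' ((X₀ * M * X₀ᵀ).trace) * (((X - X₀) * M * (X - X₀)ᵀ).trace)
      + ρ' ((X₀ * M * X₀ᵀ).trace) * (((X₀ * M) * (X - X₀)ᵀ).trace)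
      + (1/2) * ρ ((X₀ * M * X₀ᵀ).trace)
      = (1/2) * ρ ((X * M * Xᵀ).trace)) :=
  loss_majorization_general M hM ρ ρ' hdiff hconc X X₀
end

section
/- Let a > 0, let E = EuclideanSpace ℝ (Fin n) (n ≥ 1), and define φ : E → ℝ by φ(x) = ‖x‖² if ‖x‖² ≤ a and φ(x) = 2·√a·‖x‖ − a if ‖x‖² ≥ a. Then φ is differentiable on E, its gradient is given by ∇φ(x) = 2·x if ‖x‖ ≤ √a and ∇φ(x) = (2·√a/‖x‖)·x if ‖x‖ ≥ √a, and the gradient map x ↦ ∇φ(x) is Lipschitz continuous with constant 2: ‖∇φ(x) − ∇φ(y)‖ ≤ 2·‖x − y‖ for all x, y ∈ E. -/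
/-!
With `r = √a`, the function is `‖x‖²` on the closed ball of radius `r` and `2r‖x‖ - r²` on the
closed complement of the open ball. Each formula is smooth near its closed piece, and their
gradients `2x` and `(2r/‖x‖) x` agree on the sphere `‖x‖ = r`, so the one-sided derivatives glue.
The gradient is therefore `2 • radialRetraction r x`, twice the metric projection onto the ball.
Like any projection onto a closed convex set it satisfies `⟪x - P x, P y - P x⟫ ≤ 0`, and adding
this for `(x, y)` and `(y, x)` gives `‖P x - P y‖² ≤ ⟪x - y, P x - P y⟫`, so `P` is `1`-Lipschitz.
-/

open Set Metric RealInnerProductSpace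

theorem hasFDerivAt_of_isClosed_union {𝕜 E F : Type*} [NontriviallyNormedField 𝕜]
    [NormedAddCommGroup E] [NormedSpace 𝕜 E] [NormedAddCommGroup F] [NormedSpace 𝕜 F]
    {f : E → F} {f' : E →L[𝕜] F} {s t : Set E} {x : E}
    (hs : IsClosed s) (ht : IsClosed t) (hst : s ∪ t = univ)
    (hfs : x ∈ s → HasFDerivWithinAt f f' s x) (hft : x ∈ t → HasFDerivWithinAt f f' t x) :
    HasFDerivAt f f' x := by
  have hfs' : HasFDerivWithinAt f f' s x := by
    by_cases hx : x ∈ s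
    · exact hfs hx
    · exact .of_notMem_closure (by rwa [hs.closure_eq])
  have hft' : HasFDerivWithinAt f f' t x := by
    by_cases hx : x ∈ t
    · exact hft hx
    · exact .of_notMem_closure (by rwa [ht.closure_eq])
  simpa only [hst, hasFDerivWithinAt_univ] using hfs'.union hft'

variable {E : Type*} [NormedAddCommGroup E] {r : ℝ} {x : E}

noncomputable def huberNormSq (r : ℝ) (x : E) : ℝ :=
  if ‖x‖ ≤ r then ‖x‖ ^ 2 else 2 * r * ‖x‖ - r ^ 2

theorem huberNormSq_of_norm_le (h : ‖x‖ ≤ r) : huberNormSq r x = ‖x‖ ^ 2 := if_pos h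

theorem huberNormSq_of_le_norm (h : r ≤ ‖x‖) : huberNormSq r x = 2 * r * ‖x‖ - r ^ 2 := by
  unfold huberNormSq
  split_ifs with hle
  · obtain rfl : r = ‖x‖ := le_antisymm h hle
    ring
  · rfl

section NormedSpace

variable [NormedSpace ℝ E]

noncomputable def radialRetraction (r : ℝ) (x : E) : E :=
  if ‖x‖ ≤ r then x else (r / ‖x‖) • x

theorem radialRetraction_of_norm_le (h : ‖x‖ ≤ r) : radialRetraction r x = x := if_pos h

theorem radialRetraction_of_le_norm (h : r ≤ ‖x‖) : radialRetraction r x = (r / ‖x‖) • x := by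
  unfold radialRetraction
  split_ifs with hle
  · obtain rfl : r = ‖x‖ := le_antisymm h hle
    rcases eq_or_ne x 0 with rfl | hx
    · simp
    · rw [div_self (norm_ne_zero_iff.2 hx), one_smul]
  · rfl

theorem norm_radialRetraction_le (hr : 0 ≤ r) (x : E) : ‖radialRetraction r x‖ ≤ r := by
  rcases le_total ‖x‖ r with h | h
  · rwa [radialRetraction_of_norm_le h]
  · rw [radialRetraction_of_le_norm h, norm_smul, Real.norm_eq_abs, abs_div, abs_norm,
      abs_of_nonneg hr]
    rcases (norm_nonneg x).eq_or_lt with hx | hx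
    · simp [← hx, hr]
    · rw [div_mul_cancel₀ _ hx.ne']

end NormedSpace

section InnerProductSpace

variable [InnerProductSpace ℝ E]

theorem lipschitzWith_one_of_inner_sub_nonpos {P : E → E}
    (hP : ∀ x y, ⟪x - P x, P y - P x⟫ ≤ 0) : LipschitzWith 1 P := by
  refine LipschitzWith.of_dist_le_mul fun x y => ?_
  rw [NNReal.coe_one, one_mul, dist_eq_norm, dist_eq_norm]
  have hsum : ⟪x - P x, P y - P x⟫ + ⟪y - P y, P x - P y⟫
      = ‖P x - P y‖ ^ 2 - ⟪x - y, P x - P y⟫ := by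
    rw [← real_inner_self_eq_norm_sq]
    simp only [inner_sub_left, inner_sub_right, real_inner_comm]
    ring
  have hcs : ⟪x - y, P x - P y⟫ ≤ ‖x - y‖ * ‖P x - P y‖ := real_inner_le_norm _ _
  nlinarith [hP x y, hP y x, norm_nonneg (x - y), norm_nonneg (P x - P y)]

theorem inner_sub_radialRetraction_nonpos (hr : 0 ≤ r) (x : E) {z : E} (hz : ‖z‖ ≤ r) :
    ⟪x - radialRetraction r x, z - radialRetraction r x⟫ ≤ 0 := by
  rcases le_or_gt ‖x‖ r with h | h
  · simp [radialRetraction_of_norm_le h]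
  have hx : 0 < ‖x‖ := hr.trans_lt h
  have hc : r / ‖x‖ ≤ 1 := (div_le_one hx).2 h.le
  have hxz : ⟪x, z⟫ ≤ ‖x‖ * r := (real_inner_le_norm x z).trans (by gcongr)
  have hexpand : ⟪x - (r / ‖x‖) • x, z - (r / ‖x‖) • x⟫
      = (1 - r / ‖x‖) * (⟪x, z⟫ - ‖x‖ * r) := by
    simp only [inner_sub_left, inner_sub_right, real_inner_smul_left, real_inner_smul_right,
      real_inner_self_eq_norm_sq, norm_smul, mul_pow, Real.norm_eq_abs, sq_abs]
    field_simp
  rw [radialRetraction_of_le_norm h.le, hexpand]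
  exact mul_nonpos_of_nonneg_of_nonpos (sub_nonneg.2 hc) (sub_nonpos.2 hxz)

theorem lipschitzWith_radialRetraction (hr : 0 ≤ r) :
    LipschitzWith 1 (radialRetraction (E := E) r) :=
  lipschitzWith_one_of_inner_sub_nonpos fun x y =>
    inner_sub_radialRetraction_nonpos hr x (norm_radialRetraction_le hr y)

variable [CompleteSpace E]

theorem hasGradientAt_norm_sq (x : E) :
    HasGradientAt (fun y : E => ‖y‖ ^ 2) ((2 : ℝ) • x) x := by
  refine (hasStrictFDerivAt_norm_sq x).hasFDerivAt.congr_fderiv ?_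
  ext y
  simp

theorem hasGradientAt_norm (hx : x ≠ 0) : HasGradientAt (‖·‖) (‖x‖⁻¹ • x) x := by
  have h := (hasStrictFDerivAt_norm_sq x).hasFDerivAt.sqrt (by positivity)
  simp only [Real.sqrt_sq (norm_nonneg _)] at h
  refine h.congr_fderiv ?_
  ext y
  simp only [one_div, mul_inv_rev, smul_apply, coe_innerSL_apply,
    nsmul_eq_mul, Nat.cast_ofNat, smul_eq_mul, map_smul, InnerProductSpace.toDual_apply_apply]
  field_simp

theorem hasGradientAt_huberNormSq (hr : 0 < r) (x : E) :
    HasGradientAt (huberNormSq r) ((2 : ℝ) • radialRetraction r x) x := by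
  refine hasFDerivAt_of_isClosed_union (s := closedBall 0 r) (t := {y | r ≤ ‖y‖})
    isClosed_closedBall (isClosed_le continuous_const continuous_norm) ?_ (fun hx => ?_)
    (fun hx => ?_)
  · ext y
    simp [le_total]
  · rw [mem_closedBall_zero_iff] at hx
    rw [radialRetraction_of_norm_le hx]
    exact (hasGradientAt_norm_sq x).hasFDerivAt.hasFDerivWithinAt.congr
      (fun y hy => huberNormSq_of_norm_le (mem_closedBall_zero_iff.1 hy))
      (huberNormSq_of_norm_le hx)
  · have hx0 : x ≠ 0 := norm_pos_iff.1 (hr.trans_le hx)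
    have hlin := ((hasGradientAt_norm hx0).hasFDerivAt.const_mul (2 * r)).sub_const (r ^ 2)
    rw [radialRetraction_of_le_norm hx]
    refine HasFDerivWithinAt.congr (f := fun y => 2 * r * ‖y‖ - r ^ 2) ?_
      (fun y hy => huberNormSq_of_le_norm hy) (huberNormSq_of_le_norm hx)
    convert hlin.hasFDerivWithinAt using 1
    rw [← map_smul, smul_smul, smul_smul]
    congr 2
    ring

end InnerProductSpace

theorem huber_gradient_lipschitz_general {n : ℕ} (a : ℝ) (ha : 0 < a)
    (φ : EuclideanSpace ℝ (Fin n) → ℝ)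
    (hφ : ∀ x, φ x = if ‖x‖^2 ≤ a then ‖x‖^2 else 2 * Real.sqrt a * ‖x‖ - a) :
    Differentiable ℝ φ ∧
    (∀ x, gradient φ x =
      if ‖x‖ ≤ Real.sqrt a then (2:ℝ) • x else (2 * Real.sqrt a / ‖x‖) • x) ∧
    (∀ x y, ‖gradient φ x - gradient φ y‖ ≤ 2 * ‖x - y‖) := by
  have hr : 0 < √a := Real.sqrt_pos.2 ha
  have hφ_eq : φ = huberNormSq √a := by
    funext x
    simp only [hφ, huberNormSq, Real.le_sqrt (norm_nonneg x) ha.le, Real.sq_sqrt ha.le]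
  have hgrad (x) : HasGradientAt φ ((2 : ℝ) • radialRetraction √a x) x :=
    hφ_eq ▸ hasGradientAt_huberNormSq hr x
  refine ⟨fun x => (hgrad x).differentiableAt, fun x => ?_, fun x y => ?_⟩
  · rw [(hgrad x).gradient, radialRetraction, smul_ite, smul_smul, mul_div_assoc]
  · rw [(hgrad x).gradient, (hgrad y).gradient, ← smul_sub, norm_smul, Real.norm_two]
    gcongr
    simpa using (lipschitzWith_radialRetraction hr.le).norm_sub_le x y

/-- the Huber loss composed with the squared norm,
`φ(x) = ‖x‖²` if `‖x‖² ≤ a` and `φ(x) = 2√a‖x‖ − a` otherwise, is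
differentiable with the stated gradient and has a `2`-Lipschitz gradient. -/
theorem huber_gradient_lipschitz {n : ℕ} (hn : 1 ≤ n) (a : ℝ) (ha : 0 < a)
    (φ : EuclideanSpace ℝ (Fin n) → ℝ)
    (hφ : ∀ x, φ x = if ‖x‖^2 ≤ a then ‖x‖^2 else 2 * Real.sqrt a * ‖x‖ - a) :
    Differentiable ℝ φ ∧
    (∀ x, gradient φ x =
      if ‖x‖ ≤ Real.sqrt a then (2:ℝ) • x else (2 * Real.sqrt a / ‖x‖) • x) ∧
    (∀ x y, ‖gradient φ x - gradient φ y‖ ≤ 2 * ‖x - y‖) :=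
  huber_gradient_lipschitz_general a ha φ hφ
end

section
/- Let a > 0, let E = EuclideanSpace ℝ (Fin n) (n ≥ 1), and define φ : E → ℝ by φ(x) = a − a·exp(−‖x‖²/a). Then φ is differentiable on E with gradient ∇φ(x) = 2·exp(−‖x‖²/a)·x, and the gradient map is Lipschitz continuous with constant 2: ‖∇φ(x) − ∇φ(y)‖ ≤ 2·‖x − y‖ for all x, y ∈ E. -/
/-!
With `s = ‖x‖² / a`, the gradient `x ↦ 2 e^{-s} x` has derivative `2 e^{-s} (I - (2/a) x xᵀ)`.
The operator `I - c x xᵀ` has norm `max 1 |1 - c‖x‖²|`, so the derivative has norm at most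
`2 e^{-s} max 1 |1 - 2s| ≤ 2`, because `|1 - 2s| ≤ e^s` for `s ≥ 0`. The mean value inequality
turns this bound into the Lipschitz constant `2`.
-/

open Real
open scoped RealInnerProductSpace

lemma abs_one_sub_two_mul_le_exp {s : ℝ} (hs : 0 ≤ s) : |1 - 2 * s| ≤ exp s := by
  rw [abs_le]
  constructor
  · nlinarith [quadratic_le_exp_of_nonneg hs]
  · linarith [add_one_le_exp s]

lemma exp_neg_mul_max_one_abs_one_sub_two_mul_le {s : ℝ} (hs : 0 ≤ s) :
    exp (-s) * max 1 |1 - 2 * s| ≤ 1 := by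
  rw [mul_max_of_nonneg _ _ (exp_pos _).le, mul_one, max_le_iff]
  refine ⟨exp_le_one_iff.2 (neg_nonpos.2 hs), ?_⟩
  calc exp (-s) * |1 - 2 * s| ≤ exp (-s) * exp s := by gcongr; exact abs_one_sub_two_mul_le_exp hs
    _ = 1 := by rw [← exp_add, neg_add_cancel, exp_zero]

section

variable {E : Type*} [NormedAddCommGroup E] [InnerProductSpace ℝ E]

lemma norm_id_sub_smul_smulRight_innerSL_le (c : ℝ) (x : E) :
    ‖ContinuousLinearMap.id ℝ E - c • (innerSL ℝ x).smulRight x‖ ≤ max 1 |1 - c * ‖x‖ ^ 2| := by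
  set r := c * ‖x‖ ^ 2
  set M := max 1 |1 - r|
  have hM1 : 1 ≤ M ^ 2 := one_le_pow₀ (le_max_left _ _)
  have hMr : (1 - r) ^ 2 ≤ M ^ 2 := by
    rw [← sq_abs]; exact pow_le_pow_left₀ (abs_nonneg _) (le_max_right _ _) 2
  refine ContinuousLinearMap.opNorm_le_bound _ (by positivity) fun h => ?_
  set t := ⟪x, h⟫
  have hsq : ‖h - (c * t) • x‖ ^ 2 = ‖h‖ ^ 2 + c * (r - 2) * t ^ 2 := by
    rw [norm_sub_sq_real, inner_smul_right, norm_smul, real_inner_comm, Real.norm_eq_abs, mul_pow,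
      sq_abs]
    ring
  have hCS : t ^ 2 ≤ ‖x‖ ^ 2 * ‖h‖ ^ 2 := by
    rw [← mul_pow, ← sq_abs]; exact pow_le_pow_left₀ (abs_nonneg _) (abs_real_inner_le_norm x h) 2
  have hbound : ‖h - (c * t) • x‖ ^ 2 ≤ (M * ‖h‖) ^ 2 := by
    rw [hsq, mul_pow]
    rcases le_or_gt (c * (r - 2)) 0 with hneg | hpos
    · nlinarith [mul_nonpos_of_nonpos_of_nonneg hneg (sq_nonneg t), sq_nonneg ‖h‖]
    · have : c * (r - 2) * t ^ 2 ≤ r * (r - 2) * ‖h‖ ^ 2 := by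
        calc c * (r - 2) * t ^ 2 ≤ c * (r - 2) * (‖x‖ ^ 2 * ‖h‖ ^ 2) := by gcongr
          _ = r * (r - 2) * ‖h‖ ^ 2 := by ring
      nlinarith [sq_nonneg ‖h‖]
  have happ : (ContinuousLinearMap.id ℝ E - c • (innerSL ℝ x).smulRight x) h = h - (c * t) • x := by
    simp [t, mul_smul]
  rw [happ]
  exact le_of_pow_le_pow_left₀ two_ne_zero (by positivity) hbound

lemma hasFDerivAt_exp_neg_norm_sq_div (a : ℝ) (x : E) :
    HasFDerivAt (fun y : E => exp (-‖y‖ ^ 2 / a))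
      ((-(2 / a) * exp (-‖x‖ ^ 2 / a)) • innerSL ℝ x) x := by
  convert ((hasStrictFDerivAt_norm_sq x).hasFDerivAt.neg.mul_const a⁻¹).exp using 1
  · funext y
    simp only [div_eq_mul_inv, Pi.neg_apply]
  · ext v
    simp only [div_eq_mul_inv, neg_mul, neg_smul, neg_apply, smul_apply, coe_innerSL_apply,
      smul_eq_mul, Pi.neg_apply, smul_neg, nsmul_eq_mul, Nat.cast_ofNat, neg_inj]
    ring

noncomputable def welschGrad (a : ℝ) (x : E) : E := (2 * exp (-‖x‖ ^ 2 / a)) • x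

lemma hasFDerivAt_welschGrad (a : ℝ) (x : E) :
    HasFDerivAt (welschGrad a)
      ((2 * exp (-‖x‖ ^ 2 / a)) •
        (ContinuousLinearMap.id ℝ E - (2 / a) • (innerSL ℝ x).smulRight x)) x := by
  refine (((hasFDerivAt_exp_neg_norm_sq_div a x).const_mul 2).smul
    (hasFDerivAt_id x)).congr_fderiv ?_
  refine ContinuousLinearMap.ext fun v => ?_
  simp only [neg_mul, neg_smul, smul_neg, id_eq, add_apply,
    smul_apply, ContinuousLinearMap.id_apply, ContinuousLinearMap.smulRight_apply,
    neg_apply, coe_innerSL_apply, smul_eq_mul, sub_apply]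
  module

lemma lipschitzWith_welschGrad {a : ℝ} (ha : 0 ≤ a) : LipschitzWith 2 (welschGrad (E := E) a) := by
  refine lipschitzWith_of_nnnorm_fderiv_le
    (fun x => (hasFDerivAt_welschGrad a x).differentiableAt) fun x => ?_
  rw [(hasFDerivAt_welschGrad a x).fderiv, ← NNReal.coe_le_coe, coe_nnnorm]
  have hs : 0 ≤ ‖x‖ ^ 2 / a := by positivity
  have hT := norm_id_sub_smul_smulRight_innerSL_le (2 / a) x
  rw [show 2 / a * ‖x‖ ^ 2 = 2 * (‖x‖ ^ 2 / a) by ring] at hT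
  rw [norm_smul, Real.norm_of_nonneg (by positivity), neg_div, mul_assoc]
  calc 2 * (exp (-(‖x‖ ^ 2 / a)) * _)
      ≤ 2 * (exp (-(‖x‖ ^ 2 / a)) * max 1 |1 - 2 * (‖x‖ ^ 2 / a)|) := by gcongr
    _ ≤ 2 * 1 := by gcongr; exact exp_neg_mul_max_one_abs_one_sub_two_mul_le hs
    _ = (2 : NNReal) := by norm_num

lemma hasGradientAt_welsch [CompleteSpace E] {a : ℝ} (ha : a ≠ 0) (x : E) :
    HasGradientAt (fun y : E => a - a * exp (-‖y‖ ^ 2 / a)) (welschGrad a x) x := by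
  rw [hasGradientAt_iff_hasFDerivAt]
  refine (((hasFDerivAt_exp_neg_norm_sq_div a x).const_mul a).const_sub a).congr_fderiv ?_
  refine ContinuousLinearMap.ext fun v => ?_
  simp only [neg_mul, neg_smul, smul_neg, neg_neg, smul_apply, coe_innerSL_apply,
    smul_eq_mul, welschGrad, map_smul, InnerProductSpace.toDual_apply_apply]
  field_simp

end

theorem welsch_gradient_lipschitz_general {n : ℕ} (a : ℝ) (ha : 0 < a)
    (φ : EuclideanSpace ℝ (Fin n) → ℝ)
    (hφ : ∀ x, φ x = a - a * Real.exp (-‖x‖^2 / a)) :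
    Differentiable ℝ φ ∧
    (∀ x, gradient φ x = (2 * Real.exp (-‖x‖^2 / a)) • x) ∧
    (∀ x y, ‖gradient φ x - gradient φ y‖ ≤ 2 * ‖x - y‖) := by
  obtain rfl : φ = fun x => a - a * exp (-‖x‖ ^ 2 / a) := funext hφ
  have hgrad : gradient (fun x : EuclideanSpace ℝ (Fin n) => a - a * exp (-‖x‖ ^ 2 / a)) =
      welschGrad a := funext fun x => (hasGradientAt_welsch ha.ne' x).gradient
  refine ⟨fun x => (hasGradientAt_welsch ha.ne' x).differentiableAt, congrFun hgrad, fun x y => ?_⟩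
  rw [hgrad]
  exact (lipschitzWith_welschGrad ha.le).norm_sub_le x y

/-- the Welsch loss composed with the squared norm,
`φ(x) = a − a·exp(−‖x‖²/a)`, is differentiable with gradient
`∇φ(x) = 2·exp(−‖x‖²/a)·x`, and this gradient map is `2`-Lipschitz. -/
theorem welsch_gradient_lipschitz {n : ℕ} (hn : 1 ≤ n) (a : ℝ) (ha : 0 < a)
    (φ : EuclideanSpace ℝ (Fin n) → ℝ)
    (hφ : ∀ x, φ x = a - a * Real.exp (-‖x‖^2 / a)) :
    Differentiable ℝ φ ∧
    (∀ x, gradient φ x = (2 * Real.exp (-‖x‖^2 / a)) • x) ∧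
    (∀ x y, ‖gradient φ x - gradient φ y‖ ≤ 2 * ‖x - y‖) :=
  welsch_gradient_lipschitz_general a ha φ hφ
end
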